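/- Let $(\nu_N)$ be a sequence of positive Borel measures on $[0,\infty)$, all supported in a common bounded interval $[0,R]$, such that for every integer $k\ge 1$, $\int x^k\,d\nu_N(x)\to \frac{c^{k-1}}{k^{h/2}}$ as $N\to\infty$, for some $c > 0$ and positive integer $h$. Then the measures $x\,d\nu_N(x)$ converge weakly to the probability measure $\rho_{c,h}(x)\,dx$, where $\rho_{c,h}(x) = \frac{1}{c\Gamma(h/2)}\chi_{(0,c)}(x)(\log(c/x))^{h/2-1}$. Moreover, for every fixed $t$ with $0 < t\le c$, $\int \chi_{(t,\infty)}(x)\,d\nu_N(x)\to \frac{1}{c\,\Gamma(h/2+1)}(\log(c/t))^{h/2}$. -/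

import Mathlib

/-!
Under `x = c e^{-u}` the density `ρ_{c,h}` becomes a Gamma density, so the `m`-th moment of
`ρ_{c,h}(x) dx` is `c^m / (m+1)^{h/2}`, which is exactly the limit of the `m`-th moment of
`x dν_N(x)`. All these measures live on the compact interval `[0, max R c]`, where polynomials
are uniformly dense (Weierstrass), so moment convergence upgrades to convergence against every
continuous function.

For the tail, the piecewise-linear ramp rising from `0` at `a` to `1` at `b` satisfies
`1_{(b,∞)} ≤ ramp ≤ 1_{(a,∞)}`, and `ramp(x) = x · (ramp(x) / max(x, a))` with a continuous second
factor, so `∫ ramp dν_N → ∫_{(0,c)} ramp · x⁻¹ ρ`. For `a < t < b` this sandwiches `ν_N((t,∞))`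
between limits that lie between `∫_{(b,c)} x⁻¹ ρ` and `∫_{(a,c)} x⁻¹ ρ`, and
`∫_{(a,c)} x⁻¹ ρ = log(c/a)^{h/2} / (c Γ(h/2+1))` is continuous in `a`.
-/

open MeasureTheory Real Filter Set Topology Polynomial

lemma tendsto_of_forall_approx {α E : Type*} [PseudoMetricSpace E] {l : Filter α} {u : α → E}
    {y : E} (h : ∀ ε > 0, ∃ v : α → E, ∃ z, Tendsto v l (𝓝 z) ∧ dist z y ≤ ε ∧
      ∀ᶠ n in l, dist (u n) (v n) ≤ ε) :
    Tendsto u l (𝓝 y) := by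
  refine Metric.tendsto_nhds.2 fun ε hε => ?_
  obtain ⟨v, z, hv, hzy, huv⟩ := h (ε / 3) (by positivity)
  filter_upwards [huv, Metric.tendsto_nhds.1 hv (ε / 3) (by positivity)] with n h₁ h₂
  linarith [dist_triangle4 (u n) (v n) z y]

lemma dist_integral_le_of_ae_dist_le {α E : Type*} [MeasurableSpace α] [NormedAddCommGroup E]
    [NormedSpace ℝ E] {μ : Measure α} [IsFiniteMeasure μ] {f g : α → E} (hf : Integrable f μ)
    (hg : Integrable g μ) {C : ℝ} (h : ∀ᵐ x ∂μ, dist (f x) (g x) ≤ C) :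
    dist (∫ x, f x ∂μ) (∫ x, g x ∂μ) ≤ C * μ.real univ := by
  rw [dist_eq_norm, ← integral_sub hf hg]
  exact norm_integral_le_of_norm_le_const (h.mono fun x hx => by rwa [← dist_eq_norm])

lemma integral_withDensity_ofReal {α : Type*} [MeasurableSpace α] {μ : Measure α} {w : α → ℝ}
    (hw : Measurable w) (hw₀ : 0 ≤ᵐ[μ] w) (g : α → ℝ) :
    ∫ x, g x ∂μ.withDensity (fun x => ENNReal.ofReal (w x)) = ∫ x, w x * g x ∂μ := by
  rw [integral_withDensity_eq_integral_toReal_smul hw.ennreal_ofReal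
    (ae_of_all _ fun _ => ENNReal.ofReal_lt_top)]
  refine integral_congr_ae (hw₀.mono fun x hx => ?_)
  simp [ENNReal.toReal_ofReal hx]

section CompactSupport

variable {a b : ℝ}

lemma ContinuousOn.integrable_of_ae_mem_Icc {f : ℝ → ℝ} (hf : ContinuousOn f (Icc a b))
    {μ : Measure ℝ} [IsFiniteMeasure μ] (hμ : ∀ᵐ x ∂μ, x ∈ Icc a b) : Integrable f μ := by
  rw [← Measure.restrict_eq_self_of_ae_mem hμ]
  exact hf.integrableOn_Icc

lemma integral_eval_eq_sum {μ : Measure ℝ} [IsFiniteMeasure μ] (hμ : ∀ᵐ x ∂μ, x ∈ Icc a b)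
    (p : ℝ[X]) :
    ∫ x, p.eval x ∂μ = ∑ i ∈ Finset.range (p.natDegree + 1), p.coeff i * ∫ x, x ^ i ∂μ := by
  simp_rw [eval_eq_sum_range, ← integral_const_mul]
  exact integral_finsetSum _ fun i _ =>
    ((continuous_pow i).continuousOn.integrable_of_ae_mem_Icc hμ).const_mul _

variable {μ : ℕ → Measure ℝ} {μ₀ : Measure ℝ} [∀ N, IsFiniteMeasure (μ N)] [IsFiniteMeasure μ₀]

lemma tendsto_integral_eval_of_tendsto_moments (hμ : ∀ N, ∀ᵐ x ∂μ N, x ∈ Icc a b)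
    (hμ₀ : ∀ᵐ x ∂μ₀, x ∈ Icc a b)
    (hmom : ∀ m : ℕ, Tendsto (fun N => ∫ x, x ^ m ∂μ N) atTop (𝓝 (∫ x, x ^ m ∂μ₀))) (p : ℝ[X]) :
    Tendsto (fun N => ∫ x, p.eval x ∂μ N) atTop (𝓝 (∫ x, p.eval x ∂μ₀)) := by
  simp_rw [integral_eval_eq_sum (hμ _), integral_eval_eq_sum hμ₀]
  exact tendsto_finsetSum _ fun i _ => (hmom i).const_mul _

theorem tendsto_integral_of_tendsto_moments (hμ : ∀ N, ∀ᵐ x ∂μ N, x ∈ Icc a b)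
    (hμ₀ : ∀ᵐ x ∂μ₀, x ∈ Icc a b)
    (hmom : ∀ m : ℕ, Tendsto (fun N => ∫ x, x ^ m ∂μ N) atTop (𝓝 (∫ x, x ^ m ∂μ₀)))
    {f : ℝ → ℝ} (hf : ContinuousOn f (Icc a b)) :
    Tendsto (fun N => ∫ x, f x ∂μ N) atTop (𝓝 (∫ x, f x ∂μ₀)) := by
  set M := μ₀.real univ + 1
  have hM : 0 < M := by positivity
  have hmass : ∀ᶠ N in atTop, (μ N).real univ ≤ M := by
    have := hmom 0
    simp only [pow_zero, integral_const, smul_eq_mul, mul_one] at this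
    exact this.eventually (eventually_le_nhds (lt_add_one _))
  refine tendsto_of_forall_approx fun ε hε => ?_
  obtain ⟨p, hp⟩ := exists_polynomial_near_of_continuousOn a b f hf (ε / M) (by positivity)
  have happrox : ∀ ν : Measure ℝ, [IsFiniteMeasure ν] → (∀ᵐ x ∂ν, x ∈ Icc a b) →
      dist (∫ x, f x ∂ν) (∫ x, p.eval x ∂ν) ≤ ε / M * ν.real univ := fun ν _ hν =>
    dist_integral_le_of_ae_dist_le (hf.integrable_of_ae_mem_Icc hν)
      (p.continuous.continuousOn.integrable_of_ae_mem_Icc hν)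
      (hν.mono fun x hx => by rw [dist_comm]; exact (hp x hx).le)
  refine ⟨fun N => ∫ x, p.eval x ∂μ N, ∫ x, p.eval x ∂μ₀,
    tendsto_integral_eval_of_tendsto_moments hμ hμ₀ hmom p, ?_, ?_⟩
  · calc dist (∫ x, p.eval x ∂μ₀) (∫ x, f x ∂μ₀) ≤ ε / M * μ₀.real univ := by
          rw [dist_comm]; exact happrox μ₀ hμ₀
      _ ≤ ε / M * M := by gcongr; linarith
      _ = ε := div_mul_cancel₀ ε hM.ne'
  · filter_upwards [hmass] with N hN
    calc dist (∫ x, f x ∂μ N) (∫ x, p.eval x ∂μ N) ≤ ε / M * (μ N).real univ := happrox _ (hμ N)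
      _ ≤ ε / M * M := by gcongr
      _ = ε := div_mul_cancel₀ ε hM.ne'

end CompactSupport

section Ramp

noncomputable def ramp (a b x : ℝ) : ℝ := max 0 (min 1 ((x - a) / (b - a)))

variable {a b : ℝ}

lemma continuous_ramp : Continuous (ramp a b) := by
  unfold ramp
  fun_prop

lemma ramp_nonneg (x : ℝ) : 0 ≤ ramp a b x := le_max_left _ _

lemma ramp_le_one (x : ℝ) : ramp a b x ≤ 1 := max_le zero_le_one (min_le_left _ _)

lemma ramp_eq_zero (hab : a ≤ b) {x : ℝ} (hx : x ≤ a) : ramp a b x = 0 :=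
  max_eq_left (min_le_of_right_le (div_nonpos_of_nonpos_of_nonneg (by linarith) (by linarith)))

lemma ramp_eq_one (hab : a < b) {x : ℝ} (hx : b ≤ x) : ramp a b x = 1 := by
  rw [ramp, min_eq_left ((one_le_div (by linarith)).2 (by linarith))]
  exact max_eq_right zero_le_one

lemma ramp_div_max_eq_inv_mul (hab : a ≤ b) (x : ℝ) :
    ramp a b x / max x a = x⁻¹ * ramp a b x := by
  rcases le_or_gt x a with hx | hx
  · simp [ramp_eq_zero hab hx]
  · rw [max_eq_left hx.le, div_eq_inv_mul]

lemma mul_ramp_div_max (ha : 0 ≤ a) (hab : a ≤ b) (x : ℝ) :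
    x * (ramp a b x / max x a) = ramp a b x := by
  rcases le_or_gt x a with hx | hx
  · simp [ramp_eq_zero hab hx]
  · rw [max_eq_left hx.le, mul_div_cancel₀ _ (by linarith)]

lemma continuous_ramp_div_max (ha : 0 < a) : Continuous fun x => ramp a b x / max x a :=
  continuous_ramp.div (continuous_id.max continuous_const) fun x =>
    (ha.trans_le (le_max_right x a)).ne'

variable {μ : Measure ℝ} {g : ℝ → ℝ}

lemma integrableOn_ramp_mul (hg : IntegrableOn g (Ioi a) μ) :
    IntegrableOn (fun x => ramp a b x * g x) (Ioi a) μ :=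
  hg.bdd_mul continuous_ramp.aestronglyMeasurable
    (ae_of_all _ fun x => by rw [Real.norm_of_nonneg (ramp_nonneg x)]; exact ramp_le_one x)

lemma setIntegral_Ioi_ramp_mul (hab : a ≤ b) :
    ∫ x in Ioi a, ramp a b x * g x ∂μ = ∫ x, ramp a b x * g x ∂μ :=
  setIntegral_eq_integral_of_forall_compl_eq_zero fun x hx => by
    rw [ramp_eq_zero hab (not_lt.1 hx), zero_mul]

lemma setIntegral_Ioi_le_integral_ramp_mul (hab : a < b) (hg₀ : 0 ≤ᵐ[μ] g)
    (hg : IntegrableOn g (Ioi a) μ) : ∫ x in Ioi b, g x ∂μ ≤ ∫ x, ramp a b x * g x ∂μ := by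
  rw [← setIntegral_Ioi_ramp_mul hab.le]
  calc ∫ x in Ioi b, g x ∂μ = ∫ x in Ioi b, ramp a b x * g x ∂μ :=
        setIntegral_congr_fun measurableSet_Ioi fun x hx => by rw [ramp_eq_one hab hx.le, one_mul]
    _ ≤ ∫ x in Ioi a, ramp a b x * g x ∂μ :=
        setIntegral_mono_set (integrableOn_ramp_mul hg)
          (ae_restrict_of_ae (hg₀.mono fun x hx => mul_nonneg (ramp_nonneg x) hx))
          (ae_of_all _ (Ioi_subset_Ioi hab.le))

lemma integral_ramp_mul_le_setIntegral_Ioi (hab : a ≤ b) (hg₀ : 0 ≤ᵐ[μ] g)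
    (hg : IntegrableOn g (Ioi a) μ) : ∫ x, ramp a b x * g x ∂μ ≤ ∫ x in Ioi a, g x ∂μ := by
  rw [← setIntegral_Ioi_ramp_mul hab]
  exact setIntegral_mono_ae_restrict (integrableOn_ramp_mul hg) hg
    (ae_restrict_of_ae (hg₀.mono fun x hx => mul_le_of_le_one_left hx (ramp_le_one x)))

end Ramp

section Substitution

variable {c : ℝ}

lemma image_mul_exp_neg_Ioi (hc : 0 < c) : (fun u => c * exp (-u)) '' Ioi 0 = Ioo 0 c := by
  change ((c * ·) ∘ exp ∘ Neg.neg) '' _ = _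
  rw [image_comp, image_comp, image_neg_Ioi]
  simp [image_mul_left_Ioo hc]

lemma image_mul_exp_neg_Ioo_log (hc : 0 < c) {t : ℝ} (ht : 0 < t) :
    (fun u => c * exp (-u)) '' Ioo 0 (log (c / t)) = Ioo t c := by
  change ((c * ·) ∘ exp ∘ Neg.neg) '' _ = _
  rw [image_comp, image_comp, image_neg_Ioo, image_exp_Ioo, image_mul_left_Ioo hc, exp_neg,
    exp_log (by positivity), inv_div, mul_div_cancel₀ _ hc.ne', neg_zero, exp_zero, mul_one]

lemma hasDerivAt_mul_exp_neg (c u : ℝ) :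
    HasDerivAt (fun u => c * exp (-u)) (-(c * exp (-u))) u := by
  simpa using ((hasDerivAt_neg u).exp).const_mul c

lemma injective_mul_exp_neg (hc : c ≠ 0) : Function.Injective fun u => c * exp (-u) :=
  (mul_right_injective₀ hc).comp (exp_injective.comp neg_injective)

lemma integral_image_mul_exp_neg (hc : 0 < c) {s : Set ℝ} (hs : MeasurableSet s) (g : ℝ → ℝ) :
    ∫ x in (fun u => c * exp (-u)) '' s, g x = ∫ u in s, c * exp (-u) * g (c * exp (-u)) := by
  rw [integral_image_eq_integral_abs_deriv_smul hs
    (fun u _ => (hasDerivAt_mul_exp_neg c u).hasDerivWithinAt) (injective_mul_exp_neg hc.ne').injOn]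
  simp [abs_of_pos, hc]

end Substitution

section LogDensity

noncomputable def logDensity (c s x : ℝ) : ℝ := 1 / (c * Gamma s) * log (c / x) ^ (s - 1)

variable {c s : ℝ}

lemma logDensity_mul_exp_neg (hc : 0 < c) (u : ℝ) :
    logDensity c s (c * exp (-u)) = 1 / (c * Gamma s) * u ^ (s - 1) := by
  rw [logDensity, div_mul_cancel_left₀ hc.ne', exp_neg, inv_inv, log_exp]

lemma logDensity_nonneg (hc : 0 < c) (hs : 0 < s) {x : ℝ} (hx : x ∈ Ioc 0 c) :
    0 ≤ logDensity c s x := by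
  have : 0 ≤ log (c / x) := log_nonneg ((one_le_div hx.1).2 hx.2)
  unfold logDensity
  positivity

lemma measurable_logDensity : Measurable (logDensity c s) := by
  unfold logDensity
  fun_prop

lemma integral_pow_mul_logDensity (hc : 0 < c) (hs : 0 < s) (m : ℕ) :
    ∫ x in Ioo 0 c, x ^ m * logDensity c s x = c ^ m / (m + 1) ^ s := by
  have hsub : ∀ u, c * exp (-u) * ((c * exp (-u)) ^ m * logDensity c s (c * exp (-u))) =
      c ^ m / Gamma s * (u ^ (s - 1) * exp (-((m + 1) * u))) := by
    intro u
    rw [logDensity_mul_exp_neg hc, show -((m + 1) * u) = (m + 1 : ℕ) * -u by push_cast; ring,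
      exp_nat_mul]
    field_simp
    ring
  rw [← image_mul_exp_neg_Ioi hc, integral_image_mul_exp_neg hc measurableSet_Ioi]
  simp_rw [hsub]
  rw [integral_const_mul, integral_rpow_mul_exp_neg_mul_Ioi hs (by positivity),
    one_div, inv_rpow (by positivity)]
  field_simp [(Gamma_pos_of_pos hs).ne']

lemma integrableOn_pow_mul_logDensity (hc : 0 < c) (hs : 0 < s) (m : ℕ) :
    IntegrableOn (fun x => x ^ m * logDensity c s x) (Ioo 0 c) :=
  .of_integral_ne_zero (by rw [integral_pow_mul_logDensity hc hs]; positivity)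

lemma integral_inv_mul_logDensity (hc : 0 < c) (hs : 0 < s) {t : ℝ} (ht : 0 < t) (htc : t ≤ c) :
    ∫ x in Ioo t c, x⁻¹ * logDensity c s x = 1 / (c * Gamma (s + 1)) * log (c / t) ^ s := by
  have hL : 0 ≤ log (c / t) := log_nonneg ((one_le_div ht).2 htc)
  have hsub : ∀ u, c * exp (-u) * ((c * exp (-u))⁻¹ * logDensity c s (c * exp (-u))) =
      1 / (c * Gamma s) * u ^ (s - 1) := by
    intro u
    rw [logDensity_mul_exp_neg hc, mul_inv_cancel_left₀ (by positivity)]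
  rw [← image_mul_exp_neg_Ioo_log hc ht, integral_image_mul_exp_neg hc measurableSet_Ioo]
  simp_rw [hsub]
  rw [integral_const_mul, ← integral_Ioc_eq_integral_Ioo, ← intervalIntegral.integral_of_le hL,
    integral_rpow (by left; linarith), sub_add_cancel, zero_rpow hs.ne', sub_zero,
    Gamma_add_one hs.ne']
  field_simp

lemma integrableOn_inv_mul_logDensity (hc : 0 < c) (hs : 0 < s) {t : ℝ} (ht : 0 < t) (htc : t < c) :
    IntegrableOn (fun x => x⁻¹ * logDensity c s x) (Ioo t c) := by
  refine .of_integral_ne_zero ?_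
  rw [integral_inv_mul_logDensity hc hs ht htc.le]
  have : 0 < log (c / t) := log_pos ((one_lt_div ht).2 htc)
  positivity

end LogDensity

theorem tendsto_integral_mul_logDensity_of_tendsto_moments {ν : ℕ → Measure ℝ}
    [∀ N, IsFiniteMeasure (ν N)] {R c s : ℝ} (hc : 0 < c) (hs : 0 < s)
    (hν : ∀ N, ∀ᵐ x ∂ν N, x ∈ Icc 0 R)
    (hmom : ∀ m : ℕ, Tendsto (fun N => ∫ x, x ^ (m + 1) ∂ν N) atTop (𝓝 (c ^ m / (m + 1) ^ s)))
    {f : ℝ → ℝ} (hf : Continuous f) :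
    Tendsto (fun N => ∫ x, x * f x ∂ν N) atTop (𝓝 (∫ x in Ioo 0 c, f x * logDensity c s x)) := by
  let μ N := (ν N).withDensity fun x => ENNReal.ofReal x
  let μ₀ := (volume.restrict (Ioo 0 c)).withDensity fun x => ENNReal.ofReal (logDensity c s x)
  have hμ N (g : ℝ → ℝ) : ∫ x, g x ∂μ N = ∫ x, x * g x ∂ν N :=
    integral_withDensity_ofReal measurable_id ((hν N).mono fun x hx => hx.1) g
  have hμ₀ (g : ℝ → ℝ) : ∫ x, g x ∂μ₀ = ∫ x in Ioo 0 c, logDensity c s x * g x :=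
    integral_withDensity_ofReal measurable_logDensity ((ae_restrict_mem measurableSet_Ioo).mono
      fun x hx => logDensity_nonneg hc hs (Ioo_subset_Ioc_self hx)) g
  have (N : ℕ) : IsFiniteMeasure (μ N) := isFiniteMeasure_withDensity_ofReal
    (continuousOn_id.integrable_of_ae_mem_Icc (hν N)).hasFiniteIntegral
  have hρ : IntegrableOn (logDensity c s) (Ioo 0 c) := by
    simpa using integrableOn_pow_mul_logDensity hc hs 0
  have : IsFiniteMeasure μ₀ := isFiniteMeasure_withDensity_ofReal hρ.hasFiniteIntegral
  have hsupp : ∀ N, ∀ᵐ x ∂μ N, x ∈ Icc 0 (max R c) := fun N =>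
    (withDensity_absolutelyContinuous _ _).ae_le <|
      (hν N).mono fun x hx => ⟨hx.1, hx.2.trans (le_max_left R c)⟩
  have hsupp₀ : ∀ᵐ x ∂μ₀, x ∈ Icc 0 (max R c) :=
    (withDensity_absolutelyContinuous _ _).ae_le <| (ae_restrict_mem measurableSet_Ioo).mono
      fun x hx => ⟨hx.1.le, hx.2.le.trans (le_max_right R c)⟩
  have hmom' (m : ℕ) : Tendsto (fun N => ∫ x, x ^ m ∂μ N) atTop (𝓝 (∫ x, x ^ m ∂μ₀)) := by
    simp_rw [hμ, hμ₀, ← pow_succ', mul_comm (logDensity c s _), integral_pow_mul_logDensity hc hs]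
    exact hmom m
  simpa only [hμ, hμ₀, mul_comm (logDensity c s _)] using
    tendsto_integral_of_tendsto_moments hsupp hsupp₀ hmom' hf.continuousOn

section Tail

variable {ν : ℕ → Measure ℝ} [∀ N, IsFiniteMeasure (ν N)] {c s : ℝ}

lemma measureReal_Ioi_le_integral_ramp {a b : ℝ} (hab : a < b) (N : ℕ) :
    (ν N).real (Ioi b) ≤ ∫ x, ramp a b x ∂ν N := by
  simpa using setIntegral_Ioi_le_integral_ramp_mul (μ := ν N) (g := 1) hab
    (ae_of_all _ fun _ => zero_le_one) (integrable_const 1).integrableOn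

lemma integral_ramp_le_measureReal_Ioi {a b : ℝ} (hab : a ≤ b) (N : ℕ) :
    ∫ x, ramp a b x ∂ν N ≤ (ν N).real (Ioi a) := by
  simpa using integral_ramp_mul_le_setIntegral_Ioi (μ := ν N) (g := 1) hab
    (ae_of_all _ fun _ => zero_le_one) (integrable_const 1).integrableOn

lemma restrict_Ioo_restrict_Ioi {a : ℝ} (ha : 0 ≤ a) :
    (volume.restrict (Ioo 0 c)).restrict (Ioi a) = volume.restrict (Ioo a c) := by
  rw [Measure.restrict_restrict measurableSet_Ioi, Ioi_inter_Ioo, max_eq_left ha]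

lemma inv_mul_logDensity_nonneg_ae (hc : 0 < c) (hs : 0 < s) :
    0 ≤ᵐ[volume.restrict (Ioo 0 c)] fun x => x⁻¹ * logDensity c s x :=
  (ae_restrict_mem measurableSet_Ioo).mono fun _ hx =>
    mul_nonneg (inv_nonneg.2 hx.1.le) (logDensity_nonneg hc hs (Ioo_subset_Ioc_self hx))

lemma integral_ramp_mul_inv_mul_logDensity_le (hc : 0 < c) (hs : 0 < s) {a b : ℝ} (ha : 0 < a)
    (hac : a < c) (hab : a ≤ b) :
    ∫ x in Ioo 0 c, ramp a b x * (x⁻¹ * logDensity c s x) ≤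
      1 / (c * Gamma (s + 1)) * log (c / a) ^ s := by
  have h := integral_ramp_mul_le_setIntegral_Ioi hab (inv_mul_logDensity_nonneg_ae hc hs)
    (by rw [IntegrableOn, restrict_Ioo_restrict_Ioi ha.le]
        exact integrableOn_inv_mul_logDensity hc hs ha hac)
  rwa [restrict_Ioo_restrict_Ioi ha.le, integral_inv_mul_logDensity hc hs ha hac.le] at h

lemma le_integral_ramp_mul_inv_mul_logDensity (hc : 0 < c) (hs : 0 < s) {a b : ℝ} (ha : 0 < a)
    (hab : a < b) (hbc : b ≤ c) :
    1 / (c * Gamma (s + 1)) * log (c / b) ^ s ≤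
      ∫ x in Ioo 0 c, ramp a b x * (x⁻¹ * logDensity c s x) := by
  have h := setIntegral_Ioi_le_integral_ramp_mul hab (inv_mul_logDensity_nonneg_ae hc hs)
    (by rw [IntegrableOn, restrict_Ioo_restrict_Ioi ha.le]
        exact integrableOn_inv_mul_logDensity hc hs ha (hab.trans_le hbc))
  rwa [restrict_Ioo_restrict_Ioi (ha.trans hab).le,
    integral_inv_mul_logDensity hc hs (ha.trans hab) hbc] at h

theorem tendsto_measureReal_Ioi_of_tendsto_integral_mul (hc : 0 < c) (hs : 0 < s)
    (hweak : ∀ f : ℝ → ℝ, Continuous f → Tendsto (fun N => ∫ x, x * f x ∂ν N) atTop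
      (𝓝 (∫ x in Ioo 0 c, f x * logDensity c s x)))
    {t : ℝ} (ht : 0 < t) (htc : t ≤ c) :
    Tendsto (fun N => (ν N).real (Ioi t)) atTop
      (𝓝 (1 / (c * Gamma (s + 1)) * log (c / t) ^ s)) := by
  have hramp {a b : ℝ} (ha : 0 < a) (hab : a ≤ b) : Tendsto (fun N => ∫ x, ramp a b x ∂ν N) atTop
      (𝓝 (∫ x in Ioo 0 c, ramp a b x * (x⁻¹ * logDensity c s x))) := by
    have h := hweak _ (continuous_ramp_div_max (b := b) ha)
    simp_rw [mul_ramp_div_max ha.le hab, ramp_div_max_eq_inv_mul hab, mul_assoc,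
      mul_left_comm _ (ramp a b _)] at h
    exact h
  have hT : ContinuousAt (fun a => 1 / (c * Gamma (s + 1)) * log (c / a) ^ s) t := by
    fun_prop (disch := first | positivity | exact Or.inr hs.le)
  refine tendsto_order.2 ⟨fun l hl => ?_, fun u hu => ?_⟩
  · rcases htc.lt_or_eq with htc | rfl
    · obtain ⟨b, hlb, htb, hbc⟩ := (((hT.eventually (lt_mem_nhds hl)).filter_mono
        nhdsWithin_le_nhds).and (Ioo_mem_nhdsGT htc)).exists
      have hlim := le_integral_ramp_mul_inv_mul_logDensity hc hs ht htb hbc.le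
      filter_upwards [(hramp ht htb.le).eventually (lt_mem_nhds (hlb.trans_le hlim))] with N hN
      exact hN.trans_le (integral_ramp_le_measureReal_Ioi htb.le N)
    · refine Eventually.of_forall fun N => hl.trans_le ?_
      simp only [div_self hc.ne', log_one, zero_rpow hs.ne', mul_zero, measureReal_nonneg]
  · obtain ⟨a, hau, ha, hat⟩ := (((hT.eventually (gt_mem_nhds hu)).filter_mono
      nhdsWithin_le_nhds).and (Ioo_mem_nhdsLT ht)).exists
    have hlim := integral_ramp_mul_inv_mul_logDensity_le hc hs ha (hat.trans_le htc) hat.le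
    filter_upwards [(hramp ha hat.le).eventually (gt_mem_nhds (hlim.trans_lt hau))] with N hN
    exact (measureReal_Ioi_le_integral_ramp hat N).trans_lt hN

end Tail

theorem weak_convergence_from_moments_general
    (c : ℝ) (hc : 0 < c) (h : ℕ) (hh : 0 < h) (R : ℝ)
    (ν : ℕ → Measure ℝ) (hfin : ∀ N, IsFiniteMeasure (ν N))
    (hsupp : ∀ N, ν N (Set.Icc 0 R)ᶜ = 0)
    (hmom : ∀ k : ℕ, 1 ≤ k →
      Tendsto (fun N => ∫ x, x ^ k ∂(ν N)) atTop
        (nhds (c ^ (k - 1) / ((k : ℝ) ^ ((h : ℝ) / 2)))))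
    (ρ : ℝ → ℝ)
    (hρ : ∀ x, ρ x = (1 / (c * Real.Gamma ((h : ℝ) / 2))) *
      Real.log (c / x) ^ ((h : ℝ) / 2 - 1)) :
    (∀ f : ℝ → ℝ, Continuous f →
      Tendsto (fun N => ∫ x, x * f x ∂(ν N)) atTop
        (nhds (∫ x in Set.Ioo 0 c, f x * ρ x))) ∧
    (∀ t : ℝ, 0 < t → t ≤ c →
      Tendsto (fun N => ((ν N) (Set.Ioi t)).toReal) atTop
        (nhds ((1 / (c * Real.Gamma ((h : ℝ) / 2 + 1))) *
          Real.log (c / t) ^ ((h : ℝ) / 2)))) := by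
  obtain rfl : ρ = logDensity c (h / 2) := funext hρ
  have hs : 0 < (h : ℝ) / 2 := by positivity
  have hν N : ∀ᵐ x ∂ν N, x ∈ Icc 0 R := measure_eq_zero_iff_ae_notMem.1 (hsupp N) |>.mono
    fun _ hx => not_not.1 hx
  have hmom' (m : ℕ) : Tendsto (fun N => ∫ x, x ^ (m + 1) ∂ν N) atTop
      (𝓝 (c ^ m / (m + 1) ^ ((h : ℝ) / 2))) := by
    simpa using hmom (m + 1) le_add_self
  have hweak (f : ℝ → ℝ) (hf : Continuous f) :=
    tendsto_integral_mul_logDensity_of_tendsto_moments hc hs hν hmom' hf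
  exact ⟨hweak, fun t ht htc => tendsto_measureReal_Ioi_of_tendsto_integral_mul hc hs hweak ht htc⟩

/-- Weak convergence from moments: if the measures `ν_N` are supported in a common
bounded interval `[0,R]` and `∫ x^k dν_N → c^{k-1}/k^{h/2}` for all `k ≥ 1`,
then `x dν_N(x)` converges weakly to `ρ_{c,h}(x) dx`, and the superlevel masses
satisfy `ν_N((t,∞)) → (1/(c Γ(h/2+1))) (log(c/t))^{h/2}` for `0 < t ≤ c`. -/
theorem weak_convergence_from_moments
    (c : ℝ) (hc : 0 < c) (h : ℕ) (hh : 0 < h) (R : ℝ) (hR : 0 < R)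
    (ν : ℕ → Measure ℝ) (hfin : ∀ N, IsFiniteMeasure (ν N))
    (hsupp : ∀ N, ν N (Set.Icc 0 R)ᶜ = 0)
    (hmom : ∀ k : ℕ, 1 ≤ k →
      Tendsto (fun N => ∫ x, x ^ k ∂(ν N)) atTop
        (nhds (c ^ (k - 1) / ((k : ℝ) ^ ((h : ℝ) / 2)))))
    (ρ : ℝ → ℝ)
    (hρ : ∀ x, ρ x = (1 / (c * Real.Gamma ((h : ℝ) / 2))) *
      Real.log (c / x) ^ ((h : ℝ) / 2 - 1)) :
    (∀ f : ℝ → ℝ, Continuous f →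
      Tendsto (fun N => ∫ x, x * f x ∂(ν N)) atTop
        (nhds (∫ x in Set.Ioo 0 c, f x * ρ x))) ∧
    (∀ t : ℝ, 0 < t → t ≤ c →
      Tendsto (fun N => ((ν N) (Set.Ioi t)).toReal) atTop
        (nhds ((1 / (c * Real.Gamma ((h : ℝ) / 2 + 1))) *
          Real.log (c / t) ^ ((h : ℝ) / 2)))) :=
  weak_convergence_from_moments_general c hc h hh R ν hfin hsupp hmom ρ hρ
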